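/- arXiv:2411.18188 — 3 statements merged into one kernel-verified Lean document; each statement's English description precedes it below -/
import Mathlib

section
/- Let Ω be an open bounded subset of ℝ^N such that the closed ball B̄_δ(0) ⊆ Ω for some δ > 0, and let f ∈ L¹(ℝ^N ∖ B̄_δ(0)) be radial and strictly decreasing, i.e. f(x) = φ(|x|) for a function φ : (0,∞) → ℝ that is strictly decreasing. If |Ω* Δ Ω| > 0, then ∫_{ℝ^N∖Ω} f(x) dx > ∫_{ℝ^N∖Ω*} f(x) dx. -/
open MeasureTheory Metric Set Filter
open scoped ENNReal Topology

/-- The volume of the unit ball in `ℝ^N`. -/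
noncomputable def ballVol (N : ℕ) : ℝ≥0∞ :=
  volume (Metric.ball (0 : EuclideanSpace ℝ (Fin N)) 1)

/-- The symmetric rearrangement `Ω*` of a set: the open ball centered at the origin
with the same volume. -/
noncomputable def rearrangeSet {N : ℕ} (Ω : Set (EuclideanSpace ℝ (Fin N))) :
    Set (EuclideanSpace ℝ (Fin N)) :=
  Metric.ball 0 (((volume Ω).toReal / (ballVol N).toReal) ^ ((N : ℝ)⁻¹))

/-- The symmetric decreasing rearrangement `u*` of a nonnegative function:
`u* x = sup {t > 0 : |{u > t}| > α_N |x|^N}` (with `sup ∅ = 0`). -/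
noncomputable def rearrangeFun {N : ℕ} (u : EuclideanSpace ℝ (Fin N) → ℝ)
    (x : EuclideanSpace ℝ (Fin N)) : ℝ :=
  sSup {t : ℝ | 0 < t ∧ ballVol N * ENNReal.ofReal (‖x‖ ^ N) < volume {y | t < u y}}

/-- `G` is a Young function with right-continuous nondecreasing density `g`. -/
structure IsYoungPair (G g : ℝ → ℝ) : Prop where
  g_zero : g 0 = 0
  g_pos : ∀ t > 0, 0 < g t
  g_mono : MonotoneOn g (Set.Ici 0)
  g_rightCont : ∀ t ≥ 0, ContinuousWithinAt g (Set.Ici t) t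
  g_tendsto : Filter.Tendsto g Filter.atTop Filter.atTop
  G_eq : ∀ t ≥ 0, G t = ∫ τ in (0:ℝ)..t, g τ

/-- The growth condition `pm ≤ t g(t)/G(t) ≤ pp` with exponents `1 < pm ≤ pp < ∞`. -/
def GrowthCond (G g : ℝ → ℝ) (pm pp : ℝ) : Prop :=
  1 < pm ∧ pm ≤ pp ∧ ∀ t > 0, pm * G t ≤ t * g t ∧ t * g t ≤ pp * G t

/-- The fractional Orlicz–Sobolev seminorm
`∬_{A×B} G(|u x − u y|/|x−y|^s) |x−y|^{−N} dx dy`. -/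
noncomputable def fracSeminorm {N : ℕ} (s : ℝ) (G : ℝ → ℝ)
    (u : EuclideanSpace ℝ (Fin N) → ℝ) (A B : Set (EuclideanSpace ℝ (Fin N))) : ℝ≥0∞ :=
  ∫⁻ x in A, ∫⁻ y in B,
    ENNReal.ofReal (G (|u x - u y| / dist x y ^ s) / dist x y ^ (N : ℝ))

/-- `u ∈ C_c^∞(Ω)`. -/
def IsTestFun {N : ℕ} (Ω : Set (EuclideanSpace ℝ (Fin N)))
    (u : EuclideanSpace ℝ (Fin N) → ℝ) : Prop :=
  ContDiff ℝ (⊤ : ℕ∞) u ∧ HasCompactSupport u ∧ tsupport u ⊆ Ω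

/-- a radial strictly decreasing function integrable away from a small closed
ball contained in `Ω` has strictly larger integral over `ℝ^N ∖ Ω` than over `ℝ^N ∖ Ω*`
when `|Ω* Δ Ω| > 0`. -/
theorem integral_complement_gt
    {N : ℕ} {Ω : Set (EuclideanSpace ℝ (Fin N))} (hΩopen : IsOpen Ω)
    (hΩbdd : Bornology.IsBounded Ω) {δ : ℝ} (hδ : 0 < δ)
    (hball : Metric.closedBall (0 : EuclideanSpace ℝ (Fin N)) δ ⊆ Ω)
    {f : EuclideanSpace ℝ (Fin N) → ℝ}
    (hf : IntegrableOn f (Metric.closedBall (0 : EuclideanSpace ℝ (Fin N)) δ)ᶜ volume)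
    {φ : ℝ → ℝ} (hφ : StrictAntiOn φ (Set.Ioi 0)) (hrad : ∀ x, x ≠ 0 → f x = φ ‖x‖)
    (hΔ : 0 < volume (symmDiff (rearrangeSet Ω) Ω)) :
    ∫ x in (rearrangeSet Ω)ᶜ, f x < ∫ x in Ωᶜ, f x := by
  classical
  rcases Nat.eq_zero_or_pos N with hN0 | hNpos
  · exfalso
    subst hN0
    have hzero : ∀ x : EuclideanSpace ℝ (Fin 0), x = 0 := fun x =>
      by ext i; exact i.elim0
    have hΩ : Ω = Set.univ := Set.eq_univ_of_forall fun x => by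
      rw [hzero x]; exact hball (Metric.mem_closedBall_self hδ.le)
    have hre : rearrangeSet Ω = Set.univ := by
      apply Set.eq_univ_of_forall
      intro x
      simp only [rearrangeSet, Metric.mem_ball, hzero x, dist_self]
      rw [Nat.cast_zero, inv_zero, Real.rpow_zero]
      norm_num
    rw [hre, hΩ, symmDiff_self] at hΔ
    simp at hΔ
  -- Main case : N ≥ 1
  have hNne : N ≠ 0 := hNpos.ne'
  haveI : Nontrivial (EuclideanSpace ℝ (Fin N)) := by
    refine ⟨⟨EuclideanSpace.single (⟨0, hNpos⟩ : Fin N) (1 : ℝ), 0, fun h => ?_⟩⟩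
    have := congrArg (fun v : EuclideanSpace ℝ (Fin N) => v ⟨0, hNpos⟩) h
    simp at this
  have hfr : Module.finrank ℝ (EuclideanSpace ℝ (Fin N)) = N := finrank_euclideanSpace_fin
  have hmeasΩ : MeasurableSet Ω := hΩopen.measurableSet
  have hvBpos : 0 < ballVol N := measure_ball_pos _ _ one_pos
  have hvBlt : ballVol N < ⊤ := measure_ball_lt_top
  have hΩfin : volume Ω < ⊤ := hΩbdd.measure_lt_top
  -- a slightly larger closed ball inside Ω
  obtain ⟨ε, hεpos, hεsub⟩ :=
    (isCompact_closedBall (0 : EuclideanSpace ℝ (Fin N)) δ).exists_cthickening_subset_open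
      hΩopen hball
  have hball' : Metric.closedBall (0 : EuclideanSpace ℝ (Fin N)) (ε + δ) ⊆ Ω := by
    rw [← cthickening_closedBall hεpos.le hδ.le]
    exact hεsub
  set r : ℝ := ((volume Ω).toReal / (ballVol N).toReal) ^ ((N : ℝ)⁻¹) with hrdef
  have hSdef : rearrangeSet Ω = Metric.ball (0 : EuclideanSpace ℝ (Fin N)) r := rfl
  have hmeasS : MeasurableSet (rearrangeSet Ω) := by
    rw [hSdef]; exact Metric.isOpen_ball.measurableSet
  have hvbt : 0 < (ballVol N).toReal := ENNReal.toReal_pos hvBpos.ne' hvBlt.ne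
  -- lower bound on the volume of Ω
  have hlow : ENNReal.ofReal ((ε + δ) ^ N) * ballVol N ≤ volume Ω := by
    have h1 : volume (Metric.closedBall (0 : EuclideanSpace ℝ (Fin N)) (ε + δ)) =
        ENNReal.ofReal ((ε + δ) ^ N) * ballVol N := by
      rw [Measure.addHaar_closedBall _ _ (by positivity : (0:ℝ) ≤ ε + δ), hfr]; rfl
    rw [← h1]
    exact measure_mono hball'
  have hlowR : (ε + δ) ^ N * (ballVol N).toReal ≤ (volume Ω).toReal := by
    have := ENNReal.toReal_mono hΩfin.ne hlow
    rwa [ENNReal.toReal_mul,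
      ENNReal.toReal_ofReal (by positivity : (0:ℝ) ≤ (ε + δ) ^ N)] at this
  have hquot : (ε + δ) ^ N ≤ (volume Ω).toReal / (ballVol N).toReal :=
    (le_div_iff₀ hvbt).2 hlowR
  have hεδr : ε + δ ≤ r := by
    calc ε + δ = ((ε + δ) ^ N) ^ ((N : ℝ)⁻¹) :=
          (Real.pow_rpow_inv_natCast (by positivity) hNne).symm
      _ ≤ r := Real.rpow_le_rpow (by positivity) hquot (by positivity)
  have hδr : δ < r := lt_of_lt_of_le (by linarith) hεδr
  have hrpos : 0 < r := lt_trans hδ hδr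
  -- S has the same volume as Ω
  have hvolS : volume (rearrangeSet Ω) = volume Ω := by
    rw [hSdef, Measure.addHaar_ball _ _ hrpos.le, hfr, hrdef,
      Real.rpow_inv_natCast_pow (by positivity) hNne]
    rw [ENNReal.ofReal_div_of_pos hvbt, ENNReal.ofReal_toReal hΩfin.ne,
      ENNReal.ofReal_toReal hvBlt.ne]
    exact ENNReal.div_mul_cancel hvBpos.ne' hvBlt.ne
  -- the complements avoid the small closed ball
  have hΩc : Ωᶜ ⊆ (Metric.closedBall (0 : EuclideanSpace ℝ (Fin N)) δ)ᶜ :=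
    Set.compl_subset_compl.2 hball
  have hSc : (rearrangeSet Ω)ᶜ ⊆ (Metric.closedBall (0 : EuclideanSpace ℝ (Fin N)) δ)ᶜ := by
    rw [hSdef]
    exact Set.compl_subset_compl.2 (Metric.closedBall_subset_ball hδr)
  -- integrability
  have hfΩc : IntegrableOn f Ωᶜ volume := hf.mono_set hΩc
  have hfSc : IntegrableOn f (rearrangeSet Ω)ᶜ volume := hf.mono_set hSc
  have hmeasA : MeasurableSet ((rearrangeSet Ω)ᶜ ∩ Ω) := hmeasS.compl.inter hmeasΩ
  have hmeasB : MeasurableSet (Ωᶜ ∩ rearrangeSet Ω) := hmeasΩ.compl.inter hmeasS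
  have hmeasK : MeasurableSet (Ωᶜ ∩ (rearrangeSet Ω)ᶜ) := hmeasΩ.compl.inter hmeasS.compl
  have hfA : IntegrableOn f ((rearrangeSet Ω)ᶜ ∩ Ω) volume := hfSc.mono_set Set.inter_subset_left
  have hfB : IntegrableOn f (Ωᶜ ∩ rearrangeSet Ω) volume := hfΩc.mono_set Set.inter_subset_left
  have hfK : IntegrableOn f (Ωᶜ ∩ (rearrangeSet Ω)ᶜ) volume := hfΩc.mono_set Set.inter_subset_left
  have hAfin : volume ((rearrangeSet Ω)ᶜ ∩ Ω) < ⊤ :=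
    lt_of_le_of_lt (measure_mono Set.inter_subset_right) hΩfin
  have hBfin : volume (Ωᶜ ∩ rearrangeSet Ω) < ⊤ :=
    lt_of_le_of_lt (measure_mono Set.inter_subset_right) (hvolS ▸ hΩfin)
  -- splitting the two integrals
  have h1 : ∫ x in Ωᶜ, f x = (∫ x in (Ωᶜ ∩ rearrangeSet Ω), f x) + ∫ x in (Ωᶜ ∩ (rearrangeSet Ω)ᶜ), f x := by
    rw [← setIntegral_union
      (Disjoint.mono Set.inter_subset_right Set.inter_subset_right disjoint_compl_right)
      hmeasK hfB hfK, Set.inter_union_compl]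
  have h2 : ∫ x in (rearrangeSet Ω)ᶜ, f x = (∫ x in ((rearrangeSet Ω)ᶜ ∩ Ω), f x) + ∫ x in (Ωᶜ ∩ (rearrangeSet Ω)ᶜ), f x := by
    have hK' : (rearrangeSet Ω)ᶜ ∩ Ωᶜ = (Ωᶜ ∩ (rearrangeSet Ω)ᶜ) := Set.inter_comm _ _
    have h := setIntegral_union (μ := volume) (f := f)
      (Disjoint.mono Set.inter_subset_right Set.inter_subset_right
        (disjoint_compl_right (a := Ω)))
      (hmeasS.compl.inter hmeasΩ.compl) hfA (hK' ▸ hfK)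
    rw [Set.inter_union_compl] at h
    rw [← hK']
    exact h
  -- equality of the volumes of A and B
  have hΩSfin : volume (Ω ∩ rearrangeSet Ω) ≠ ⊤ :=
    (lt_of_le_of_lt (measure_mono Set.inter_subset_left) hΩfin).ne
  have hA' : ((rearrangeSet Ω)ᶜ ∩ Ω) = Ω \ rearrangeSet Ω := by rw [Set.inter_comm, Set.diff_eq]
  have hB' : (Ωᶜ ∩ rearrangeSet Ω) = rearrangeSet Ω \ Ω := by rw [Set.inter_comm, Set.diff_eq]
  have hAB : volume ((rearrangeSet Ω)ᶜ ∩ Ω) = volume (Ωᶜ ∩ rearrangeSet Ω) := by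
    have e1 : volume (Ω ∩ rearrangeSet Ω) + volume (Ω \ rearrangeSet Ω) = volume Ω :=
      measure_inter_add_diff Ω hmeasS
    have e2 : volume (rearrangeSet Ω ∩ Ω) + volume (rearrangeSet Ω \ Ω) = volume (rearrangeSet Ω) :=
      measure_inter_add_diff (rearrangeSet Ω) hmeasΩ
    rw [Set.inter_comm (rearrangeSet Ω) Ω, hvolS] at e2
    rw [hA', hB']
    exact (ENNReal.add_right_inj hΩSfin).1 (e1.trans e2.symm)
  -- positivity of the volume of B
  have hBpos : 0 < volume (Ωᶜ ∩ rearrangeSet Ω) := by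
    by_contra h
    push_neg at h
    have hB0 : volume (Ωᶜ ∩ rearrangeSet Ω) = 0 := le_antisymm h zero_le
    have hA0 : volume ((rearrangeSet Ω)ᶜ ∩ Ω) = 0 := hAB.trans hB0
    have hzero : volume (symmDiff (rearrangeSet Ω) Ω) = 0 := by
      rw [Set.symmDiff_def]
      refine le_antisymm (le_trans (measure_union_le _ _) ?_) zero_le
      rw [← hB', ← hA', hB0, hA0, add_zero]
    rw [hzero] at hΔ
    exact lt_irrefl 0 hΔ
  -- pointwise comparisons with φ r
  have hAle : ∀ x ∈ ((rearrangeSet Ω)ᶜ ∩ Ω), f x ≤ φ r := by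
    intro x hx
    have hxr : r ≤ ‖x‖ := by
      have hxS : x ∉ rearrangeSet Ω := hx.1
      rw [hSdef, Metric.mem_ball, dist_zero_right, not_lt] at hxS
      exact hxS
    have hx0 : x ≠ 0 := by
      intro h
      rw [h, norm_zero] at hxr
      linarith
    rw [hrad x hx0]
    exact hφ.antitoneOn (Set.mem_Ioi.2 hrpos)
      (Set.mem_Ioi.2 (lt_of_lt_of_le hrpos hxr)) hxr
  have hBlt : ∀ x ∈ (Ωᶜ ∩ rearrangeSet Ω), φ r < f x := by
    intro x hx
    have hxδ : δ < ‖x‖ := by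
      have h := hΩc hx.1
      rw [Set.mem_compl_iff, Metric.mem_closedBall, dist_zero_right, not_le] at h
      exact h
    have hxr : ‖x‖ < r := by
      have hxS : x ∈ rearrangeSet Ω := hx.2
      rw [hSdef, Metric.mem_ball, dist_zero_right] at hxS
      exact hxS
    have hx0 : x ≠ 0 := by
      intro h
      rw [h, norm_zero] at hxδ
      linarith
    rw [hrad x hx0]
    exact hφ (Set.mem_Ioi.2 (lt_trans hδ hxδ)) (Set.mem_Ioi.2 hrpos) hxr
  -- integral bounds
  have hconstA : IntegrableOn (fun _ => φ r) ((rearrangeSet Ω)ᶜ ∩ Ω) volume :=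
    integrableOn_const hAfin.ne
  have hconstB : IntegrableOn (fun _ => φ r) (Ωᶜ ∩ rearrangeSet Ω) volume :=
    integrableOn_const hBfin.ne
  have hAint : ∫ x in ((rearrangeSet Ω)ᶜ ∩ Ω), f x ≤ (volume ((rearrangeSet Ω)ᶜ ∩ Ω)).toReal * φ r := by
    calc ∫ x in ((rearrangeSet Ω)ᶜ ∩ Ω), f x ≤ ∫ _ in ((rearrangeSet Ω)ᶜ ∩ Ω), φ r := setIntegral_mono_on hfA hconstA hmeasA hAle
      _ = (volume ((rearrangeSet Ω)ᶜ ∩ Ω)).toReal * φ r := by rw [setIntegral_const, smul_eq_mul, Measure.real_def]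
  have hBint : (volume (Ωᶜ ∩ rearrangeSet Ω)).toReal * φ r < ∫ x in (Ωᶜ ∩ rearrangeSet Ω), f x := by
    have hnn : 0 ≤ᵐ[volume.restrict (Ωᶜ ∩ rearrangeSet Ω)] fun x => f x - φ r := by
      filter_upwards [ae_restrict_mem hmeasB] with x hx
      exact sub_nonneg.2 (hBlt x hx).le
    have h0 : 0 < ∫ x in (Ωᶜ ∩ rearrangeSet Ω), (f x - φ r) := by
      refine (setIntegral_pos_iff_support_of_nonneg_ae hnn (hfB.sub hconstB)).2 ?_
      refine lt_of_lt_of_le hBpos (measure_mono fun x hx => ?_)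
      exact ⟨(sub_pos.2 (hBlt x hx)).ne', hx⟩
    rw [integral_sub hfB hconstB, setIntegral_const, smul_eq_mul, Measure.real_def] at h0
    linarith
  -- conclusion
  rw [h1, h2]
  have hmain : ∫ x in ((rearrangeSet Ω)ᶜ ∩ Ω), f x < ∫ x in (Ωᶜ ∩ rearrangeSet Ω), f x := by
    calc ∫ x in ((rearrangeSet Ω)ᶜ ∩ Ω), f x ≤ (volume ((rearrangeSet Ω)ᶜ ∩ Ω)).toReal * φ r := hAint
      _ = (volume (Ωᶜ ∩ rearrangeSet Ω)).toReal * φ r := by rw [hAB]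
      _ < ∫ x in (Ωᶜ ∩ rearrangeSet Ω), f x := hBint
  linarith
end

section
/- Let N ≥ 1, s ∈ (0,1), let G be a Young function satisfying the growth condition with exponents 1 < p⁻ ≤ p⁺ < ∞, and let Ω ⊆ ℝ^N be an open bounded set containing a closed ball B̄_δ(0) for some δ > 0 and satisfying |Ω Δ Ω*| > 0. Then for every c > 0, ∫_{ℝ^N∖Ω} G(c/|y|^s) |y|^{−N} dy > ∫_{ℝ^N∖Ω*} G(c/|y|^s) |y|^{−N} dy. -/
open MeasureTheory Metric Set Filter
open scoped ENNReal Topology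

section Helpers

variable {G g : ℝ → ℝ}

lemma young_g_nonneg (hY : IsYoungPair G g) {t : ℝ} (ht : 0 ≤ t) : 0 ≤ g t := by
  have := hY.g_mono (self_mem_Ici) (mem_Ici.2 ht) ht
  rwa [hY.g_zero] at this

lemma young_intInt (hY : IsYoungPair G g) {a b : ℝ} (h0 : 0 ≤ a) (hab : a ≤ b) :
    IntervalIntegrable g volume a b := by
  apply MonotoneOn.intervalIntegrable
  apply hY.g_mono.mono
  rw [Set.uIcc_of_le hab]
  exact fun x hx => le_trans h0 hx.1

lemma young_G_mono (hY : IsYoungPair G g) : MonotoneOn G (Set.Ici 0) := by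
  intro a ha b hb hab
  rw [hY.G_eq a ha, hY.G_eq b hb,
    ← intervalIntegral.integral_add_adjacent_intervals (young_intInt hY le_rfl ha)
      (young_intInt hY ha hab)]
  have : 0 ≤ ∫ τ in a..b, g τ :=
    intervalIntegral.integral_nonneg hab (fun x hx => young_g_nonneg hY (le_trans ha hx.1))
  linarith

lemma young_G_zero (hY : IsYoungPair G g) : G 0 = 0 := by
  rw [hY.G_eq 0 le_rfl, intervalIntegral.integral_same]

lemma young_G_nonneg (hY : IsYoungPair G g) {t : ℝ} (ht : 0 ≤ t) : 0 ≤ G t := by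
  have := young_G_mono hY self_mem_Ici (mem_Ici.2 ht) ht
  rwa [young_G_zero hY] at this

lemma young_G_pos (hY : IsYoungPair G g) {t : ℝ} (ht : 0 < t) : 0 < G t := by
  have h2 : (0:ℝ) ≤ t / 2 := by linarith
  have hint1 := young_intInt hY le_rfl h2
  have hint2 := young_intInt hY h2 (by linarith : t/2 ≤ t)
  rw [hY.G_eq t ht.le, ← intervalIntegral.integral_add_adjacent_intervals hint1 hint2]
  have hpos1 : 0 ≤ ∫ τ in (0:ℝ)..(t/2), g τ :=
    intervalIntegral.integral_nonneg h2 (fun x hx => young_g_nonneg hY hx.1)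
  have hpos2 : (t - t/2) * g (t/2) ≤ ∫ τ in (t/2)..t, g τ := by
    have := intervalIntegral.integral_mono_on (by linarith : t/2 ≤ t)
      (intervalIntegrable_const (c := g (t/2))) hint2
      (fun x hx => hY.g_mono (mem_Ici.2 h2) (mem_Ici.2 (le_trans h2 hx.1)) hx.1)
    simpa using this
  have : 0 < (t - t/2) * g (t/2) :=
    mul_pos (by linarith) (hY.g_pos _ (by linarith))
  linarith

lemma young_G_le (hY : IsYoungPair G g) {t T : ℝ} (ht : 0 ≤ t) (htT : t ≤ T) :
    G t ≤ t * g T := by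
  rw [hY.G_eq t ht]
  have := intervalIntegral.integral_mono_on ht (young_intInt hY le_rfl ht)
    (intervalIntegrable_const (c := g T))
    (fun x hx => hY.g_mono (mem_Ici.2 hx.1) (mem_Ici.2 (le_trans ht htT)) (le_trans hx.2 htT))
  simpa using this

/-- Monotonicity of the kernel. -/
lemma kern_le (hY : IsYoungPair G g) {s c Nr : ℝ} (hs : 0 < s) (hc : 0 < c) (hNr : 0 ≤ Nr)
    {a b a' b' : ℝ} (ha : 0 < a) (hab : a ≤ b) (ha' : 0 < a') (hab' : a' ≤ b') :
    G (c / b ^ s) / b' ^ Nr ≤ G (c / a ^ s) / a' ^ Nr := by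
  have hb : 0 < b := lt_of_lt_of_le ha hab
  have has : (0:ℝ) < a ^ s := Real.rpow_pos_of_pos ha s
  have hbs : (0:ℝ) < b ^ s := Real.rpow_pos_of_pos hb s
  have harg : c / b ^ s ≤ c / a ^ s := by
    gcongr
  have hG : G (c / b ^ s) ≤ G (c / a ^ s) :=
    young_G_mono hY (mem_Ici.2 (div_pos hc hbs).le) (mem_Ici.2 (div_pos hc has).le) harg
  exact div_le_div₀ (young_G_nonneg hY (div_pos hc has).le) hG
    (Real.rpow_pos_of_pos ha' Nr) (Real.rpow_le_rpow ha'.le hab' hNr)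

end Helpers

set_option maxHeartbeats 1000000 in
/-- strict comparison of the complement integrals of the radial kernel
`y ↦ G(c/|y|^s)|y|^{−N}` for `Ω` and its rearrangement `Ω*`. -/
theorem kernel_integral_complement_gt
    {N : ℕ} (hN : 1 ≤ N) {s : ℝ} (hs : s ∈ Set.Ioo (0 : ℝ) 1)
    {G g : ℝ → ℝ} (hY : IsYoungPair G g) {pm pp : ℝ} (hG : GrowthCond G g pm pp)
    {Ω : Set (EuclideanSpace ℝ (Fin N))} (hΩopen : IsOpen Ω)
    (hΩbdd : Bornology.IsBounded Ω) {δ : ℝ} (hδ : 0 < δ)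
    (hball : Metric.closedBall (0 : EuclideanSpace ℝ (Fin N)) δ ⊆ Ω)
    (hΔ : 0 < volume (symmDiff Ω (rearrangeSet Ω)))
    {c : ℝ} (hc : 0 < c) :
    (∫⁻ y in (rearrangeSet Ω)ᶜ, ENNReal.ofReal (G (c / ‖y‖ ^ s) / ‖y‖ ^ (N : ℝ))) <
      ∫⁻ y in Ωᶜ, ENNReal.ofReal (G (c / ‖y‖ ^ s) / ‖y‖ ^ (N : ℝ)) := by
  obtain ⟨hs0, hs1⟩ := hs
  set Ωs := rearrangeSet Ω with hΩsdef
  set R : ℝ := ((volume Ω).toReal / (ballVol N).toReal) ^ ((N : ℝ)⁻¹) with hRdef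
  have hΩsball : Ωs = Metric.ball (0 : EuclideanSpace ℝ (Fin N)) R := rfl
  have hNpos : (0:ℝ) < N := by exact_mod_cast hN
  have hfr : Module.finrank ℝ (EuclideanSpace ℝ (Fin N)) = N := finrank_euclideanSpace_fin
  have hv_pos : 0 < ballVol N := measure_ball_pos _ _ one_pos
  have hv_fin : ballVol N < ⊤ := measure_ball_lt_top
  have hΩ_fin : volume Ω < ⊤ := hΩbdd.measure_lt_top (μ := volume)
  have hΩ_pos : 0 < volume Ω :=
    lt_of_lt_of_le (measure_closedBall_pos _ _ hδ) (measure_mono hball)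
  have hq_pos : (0:ℝ) < (volume Ω).toReal / (ballVol N).toReal :=
    div_pos (ENNReal.toReal_pos hΩ_pos.ne' hΩ_fin.ne) (ENNReal.toReal_pos hv_pos.ne' hv_fin.ne)
  have hR_pos : 0 < R := Real.rpow_pos_of_pos hq_pos _
  have hvol_star : volume Ωs = volume Ω := by
    rw [hΩsball, Measure.addHaar_ball_of_pos volume (0 : EuclideanSpace ℝ (Fin N)) hR_pos, hfr, hRdef,
      ← Real.rpow_natCast (((volume Ω).toReal / (ballVol N).toReal) ^ ((N : ℝ)⁻¹)) N,
      ← Real.rpow_mul hq_pos.le, inv_mul_cancel₀ hNpos.ne', Real.rpow_one,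
      ENNReal.ofReal_div_of_pos (ENNReal.toReal_pos hv_pos.ne' hv_fin.ne),
      ENNReal.ofReal_toReal hΩ_fin.ne, ENNReal.ofReal_toReal hv_fin.ne]
    exact ENNReal.div_mul_cancel hv_pos.ne' hv_fin.ne
  set Kf : EuclideanSpace ℝ (Fin N) → ℝ≥0∞ := fun y => ENNReal.ofReal (G (c / ‖y‖ ^ s) / ‖y‖ ^ (N:ℝ)) with hKf
  have hmΩ : MeasurableSet Ω := hΩopen.measurableSet
  have hmΩs : MeasurableSet Ωs := measurableSet_ball
  -- equal measures of the two differences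
  have hinter_fin : volume (Ω ∩ Ωs) ≠ ⊤ :=
    (lt_of_le_of_lt (measure_mono inter_subset_left) hΩ_fin).ne
  have hms : volume (Ω \ Ωs) = volume (Ωs \ Ω) := by
    have h1 := measure_diff_add_inter Ω hmΩs (μ := volume)
    have h2 := measure_diff_add_inter Ωs hmΩ (μ := volume)
    rw [inter_comm, hvol_star, ← h1] at h2
    exact (WithTop.add_right_cancel hinter_fin h2).symm
  have hm'_fin : volume (Ωs \ Ω) < ⊤ :=
    lt_of_le_of_lt (measure_mono diff_subset) (hvol_star ▸ hΩ_fin)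
  have hm'_pos : 0 < volume (Ωs \ Ω) := by
    rcases (zero_le : (0:ℝ≥0∞) ≤ volume (Ωs \ Ω)).lt_or_eq with h | h
    · exact h
    · exfalso
      have h1 : volume (Ω \ Ωs) = 0 := hms.trans h.symm
      have : volume (symmDiff Ω Ωs) = 0 := by
        rw [Set.symmDiff_def]
        exact measure_union_null h1 h.symm
      exact absurd this (ne_of_gt hΔ)
  -- choose a slightly smaller radius catching positive measure
  obtain ⟨R', hR'0, hR'R, hSpos⟩ :
      ∃ R', 0 < R' ∧ R' < R ∧ 0 < volume ((Ωs \ Ω) ∩ ball (0:EuclideanSpace ℝ (Fin N)) R') := by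
    by_contra h
    push_neg at h
    have hnull : ∀ n : ℕ, volume ((Ωs \ Ω) ∩ ball (0:EuclideanSpace ℝ (Fin N)) (R - R/(n+2))) = 0 := by
      intro n
      have h1 : (0:ℝ) < R - R/(n+2) := by
        have : R/(n+2) < R := by
          rw [div_lt_iff₀ (by positivity)]
          nlinarith [hR_pos]
        linarith
      have h2 : R - R/(n+2) < R := by
        have : 0 < R/(n+2) := by positivity
        linarith
      exact le_antisymm (h _ h1 h2) zero_le
    have hcover : (Ωs \ Ω) ⊆ ⋃ n : ℕ, ((Ωs \ Ω) ∩ ball (0:EuclideanSpace ℝ (Fin N)) (R - R/(n+2))) := by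
      intro y hy
      have hy' : ‖y‖ < R := by
        have := hy.1; rw [hΩsball, mem_ball_zero_iff] at this; exact this
      obtain ⟨n, hn⟩ := exists_nat_gt (R / (R - ‖y‖))
      refine mem_iUnion.2 ⟨n, hy, ?_⟩
      rw [mem_ball_zero_iff]
      have hd : 0 < R - ‖y‖ := by linarith
      have hn2 : R / (R - ‖y‖) < (n:ℝ) + 2 := by linarith
      have : R / ((n:ℝ)+2) < R - ‖y‖ := by
        rw [div_lt_iff₀ (by positivity)]
        rw [div_lt_iff₀ hd] at hn2
        linarith
      linarith
    have : volume (Ωs \ Ω) = 0 :=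
      le_antisymm (le_trans (measure_mono hcover) (by rw [measure_iUnion_null hnull])) zero_le
    exact absurd this hm'_pos.ne'
  set S := (Ωs \ Ω) ∩ ball (0:EuclideanSpace ℝ (Fin N)) R' with hSdef
  have hmS : MeasurableSet S := (hmΩs.diff hmΩ).inter measurableSet_ball
  have hS_le : volume S ≤ volume (Ωs \ Ω) := measure_mono inter_subset_left
  have hS_fin : volume S < ⊤ := lt_of_le_of_lt hS_le hm'_fin
  set K0 : ℝ := G (c / R ^ s) / R ^ (N:ℝ) with hK0def
  set K1 : ℝ := G (c / R ^ s) / R' ^ (N:ℝ) with hK1def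
  have hGcRs_pos : 0 < G (c / R ^ s) :=
    young_G_pos hY (div_pos hc (Real.rpow_pos_of_pos hR_pos s))
  have hK1_pos : 0 < K1 := div_pos hGcRs_pos (Real.rpow_pos_of_pos hR'0 _)
  have hK01 : K0 < K1 :=
    div_lt_div_of_pos_left hGcRs_pos (Real.rpow_pos_of_pos hR'0 _)
      (Real.rpow_lt_rpow hR'0.le hR'R hNpos)
  -- the common outer part
  set B := Ωᶜ ∩ Ωsᶜ with hBdef
  have hmB : MeasurableSet B := hmΩ.compl.inter hmΩs.compl
  have hsplit1 : Ωᶜ = (Ωs \ Ω) ∪ B := by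
    ext y; simp only [mem_compl_iff, mem_union, mem_diff, mem_inter_iff, hBdef]; tauto
  have hsplit2 : Ωsᶜ = (Ω \ Ωs) ∪ B := by
    ext y; simp only [mem_compl_iff, mem_union, mem_diff, mem_inter_iff, hBdef]; tauto
  have hdisj1 : Disjoint (Ωs \ Ω) B :=
    (disjoint_compl_right (a := Ωs)).mono diff_subset inter_subset_right
  have hdisj2 : Disjoint (Ω \ Ωs) B :=
    (disjoint_compl_right (a := Ω)).mono diff_subset inter_subset_left
  -- memberships give norm bounds
  have hnotΩ_norm : ∀ y : EuclideanSpace ℝ (Fin N), y ∉ Ω → δ < ‖y‖ := by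
    intro y hy
    by_contra h
    push_neg at h
    exact hy (hball (mem_closedBall_zero_iff.2 h))
  -- pointwise → integral bounds
  have int_diff_le : ∫⁻ y in Ω \ Ωs, Kf y ≤ ENNReal.ofReal K0 * volume (Ω \ Ωs) := by
    rw [← setLIntegral_const]
    apply lintegral_mono_ae
    filter_upwards [ae_restrict_mem (hmΩ.diff hmΩs)] with y hy
    have hyR : R ≤ ‖y‖ := by
      have h := hy.2
      rw [hΩsball, mem_ball_zero_iff] at h
      exact le_of_not_gt h
    exact ENNReal.ofReal_le_ofReal
      (kern_le hY hs0 hc hNpos.le hR_pos hyR hR_pos hyR)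
  have int_S_ge : ENNReal.ofReal K1 * volume S ≤ ∫⁻ y in S, Kf y := by
    rw [← setLIntegral_const]
    apply lintegral_mono_ae
    filter_upwards [ae_restrict_mem hmS] with y hy
    have hy0 : 0 < ‖y‖ := hδ.trans (hnotΩ_norm y hy.1.2)
    have hyR' : ‖y‖ ≤ R' := (mem_ball_zero_iff.1 hy.2).le
    exact ENNReal.ofReal_le_ofReal
      (kern_le hY hs0 hc hNpos.le hy0 (hyR'.trans hR'R.le) hy0 hyR')
  have int_rest_ge : ENNReal.ofReal K0 * volume ((Ωs \ Ω) \ S) ≤ ∫⁻ y in (Ωs \ Ω) \ S, Kf y := by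
    rw [← setLIntegral_const]
    apply lintegral_mono_ae
    filter_upwards [ae_restrict_mem ((hmΩs.diff hmΩ).diff hmS)] with y hy
    have hy0 : 0 < ‖y‖ := hδ.trans (hnotΩ_norm y hy.1.2)
    have hyR : ‖y‖ ≤ R := by
      have := hy.1.1; rw [hΩsball, mem_ball_zero_iff] at this; exact this.le
    exact ENNReal.ofReal_le_ofReal
      (kern_le hY hs0 hc hNpos.le hy0 hyR hy0 hyR)
  -- finiteness of the common part
  have hfinB : ∫⁻ y in B, Kf y < ⊤ := by
    set ρ : ℝ := s + N with hρdef
    have hρ0 : 0 < ρ := by positivity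
    have hρN : (Module.finrank ℝ (EuclideanSpace ℝ (Fin N)) : ℝ) < ρ := by
      rw [hfr]; simp only [hρdef]; linarith
    have hTpos : 0 < c / δ ^ s := div_pos hc (Real.rpow_pos_of_pos hδ s)
    have hgT : 0 ≤ g (c / δ ^ s) := young_g_nonneg hY hTpos.le
    set C : ℝ := c * g (c / δ ^ s) * (1 + δ⁻¹) ^ ρ with hCdef
    have hC0 : 0 ≤ C := by
      apply mul_nonneg (mul_nonneg hc.le hgT)
      positivity
    have key : ∀ y : EuclideanSpace ℝ (Fin N), y ∈ B →
        Kf y ≤ ENNReal.ofReal (C * (1 + ‖y‖) ^ (-ρ)) := by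
      intro y hy
      have hr : δ < ‖y‖ := hnotΩ_norm y hy.1
      have hr0 : 0 < ‖y‖ := hδ.trans hr
      apply ENNReal.ofReal_le_ofReal
      have hys : δ ^ s ≤ ‖y‖ ^ s := Real.rpow_le_rpow hδ.le hr.le hs0.le
      have htT : c / ‖y‖ ^ s ≤ c / δ ^ s := by gcongr
      have h1 : G (c / ‖y‖ ^ s) ≤ c / ‖y‖ ^ s * g (c / δ ^ s) :=
        young_G_le hY (div_pos hc (Real.rpow_pos_of_pos hr0 s)).le htT
      have hrs : (0:ℝ) < ‖y‖ ^ s := Real.rpow_pos_of_pos hr0 s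
      have hrN : (0:ℝ) < ‖y‖ ^ (N:ℝ) := Real.rpow_pos_of_pos hr0 _
      have h2 : G (c / ‖y‖ ^ s) / ‖y‖ ^ (N:ℝ) ≤ c * g (c / δ ^ s) * ‖y‖ ^ (-ρ) := by
        have e : c / ‖y‖ ^ s * g (c / δ ^ s) / ‖y‖ ^ (N:ℝ)
            = c * g (c / δ ^ s) * ‖y‖ ^ (-ρ) := by
          rw [Real.rpow_neg hr0.le, hρdef, Real.rpow_add hr0]
          field_simp
        rw [← e]
        gcongr
      have h3 : ‖y‖ ^ (-ρ) ≤ (1 + δ⁻¹) ^ ρ * (1 + ‖y‖) ^ (-ρ) := by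
        have hone : (1:ℝ) < δ⁻¹ * ‖y‖ := by
          rw [← inv_mul_cancel₀ hδ.ne']
          exact mul_lt_mul_of_pos_left hr (inv_pos.2 hδ)
        have hle : 1 + ‖y‖ ≤ (1 + δ⁻¹) * ‖y‖ := by nlinarith
        have hkey : (1 + ‖y‖) ^ ρ ≤ ((1 + δ⁻¹) * ‖y‖) ^ ρ :=
          Real.rpow_le_rpow (by positivity) hle hρ0.le
        rw [Real.mul_rpow (by positivity) hr0.le] at hkey
        have hA : (0:ℝ) < (1 + ‖y‖) ^ ρ := by positivity
        have hB : (0:ℝ) < ‖y‖ ^ ρ := by positivity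
        rw [Real.rpow_neg hr0.le, Real.rpow_neg (by positivity : (0:ℝ) ≤ 1 + ‖y‖),
          ← div_eq_mul_inv, inv_eq_one_div, div_le_div_iff₀ hB hA]
        nlinarith
      have h4 : c * g (c / δ ^ s) * ‖y‖ ^ (-ρ)
          ≤ c * g (c / δ ^ s) * ((1 + δ⁻¹) ^ ρ * (1 + ‖y‖) ^ (-ρ)) :=
        mul_le_mul_of_nonneg_left h3 (mul_nonneg hc.le hgT)
      have h5 : c * g (c / δ ^ s) * ((1 + δ⁻¹) ^ ρ * (1 + ‖y‖) ^ (-ρ))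
          = C * (1 + ‖y‖) ^ (-ρ) := by rw [hCdef]; ring
      calc G (c / ‖y‖ ^ s) / ‖y‖ ^ (N:ℝ) ≤ c * g (c / δ ^ s) * ‖y‖ ^ (-ρ) := h2
        _ ≤ C * (1 + ‖y‖) ^ (-ρ) := by rw [← h5]; exact h4
    calc ∫⁻ y in B, Kf y
        ≤ ∫⁻ y in B, ENNReal.ofReal (C * (1 + ‖y‖) ^ (-ρ)) := by
          apply lintegral_mono_ae
          filter_upwards [ae_restrict_mem hmB] with y hy
          exact key y hy
      _ ≤ ∫⁻ y, ENNReal.ofReal (C * (1 + ‖y‖) ^ (-ρ)) := setLIntegral_le_lintegral _ _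
      _ = ∫⁻ y : EuclideanSpace ℝ (Fin N),
            ENNReal.ofReal C * ENNReal.ofReal ((1 + ‖y‖) ^ (-ρ)) := by
          simp_rw [ENNReal.ofReal_mul hC0]
      _ = ENNReal.ofReal C * ∫⁻ y : EuclideanSpace ℝ (Fin N),
            ENNReal.ofReal ((1 + ‖y‖) ^ (-ρ)) :=
          lintegral_const_mul' _ _ ENNReal.ofReal_ne_top
      _ < ⊤ := ENNReal.mul_lt_top ENNReal.ofReal_lt_top (finite_integral_one_add_norm hρN)
  -- split the two integrals
  have e1 : ∫⁻ y in Ωᶜ, Kf y = (∫⁻ y in Ωs \ Ω, Kf y) + ∫⁻ y in B, Kf y := by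
    rw [hsplit1, lintegral_union hmB hdisj1]
  have e2 : ∫⁻ y in Ωsᶜ, Kf y = (∫⁻ y in Ω \ Ωs, Kf y) + ∫⁻ y in B, Kf y := by
    rw [hsplit2, lintegral_union hmB hdisj2]
  rw [show (rearrangeSet Ω)ᶜ = Ωsᶜ from rfl, e1, e2]
  apply ENNReal.add_lt_add_right hfinB.ne
  -- the main strict comparison
  have hSsub : S ⊆ Ωs \ Ω := inter_subset_left
  have hvol_rest : volume ((Ωs \ Ω) \ S) = volume (Ωs \ Ω) - volume S :=
    measure_diff hSsub hmS.nullMeasurableSet hS_fin.ne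
  calc ∫⁻ y in Ω \ Ωs, Kf y
      ≤ ENNReal.ofReal K0 * volume (Ω \ Ωs) := int_diff_le
    _ = ENNReal.ofReal K0 * volume S + ENNReal.ofReal K0 * (volume (Ωs \ Ω) - volume S) := by
        rw [← mul_add, add_tsub_cancel_of_le hS_le, hms]
    _ < ENNReal.ofReal K1 * volume S + ENNReal.ofReal K0 * (volume (Ωs \ Ω) - volume S) := by
        apply ENNReal.add_lt_add_right
        · exact (ENNReal.mul_lt_top ENNReal.ofReal_lt_top
            (lt_of_le_of_lt (tsub_le_self) hm'_fin)).ne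
        · exact (ENNReal.mul_lt_mul_left hSpos.ne' hS_fin.ne)
            ((ENNReal.ofReal_lt_ofReal_iff hK1_pos).2 hK01)
    _ ≤ (∫⁻ y in S, Kf y) + ∫⁻ y in (Ωs \ Ω) \ S, Kf y := by
        refine add_le_add int_S_ge ?_
        rw [← hvol_rest]; exact int_rest_ge
    _ = ∫⁻ y in Ωs \ Ω, Kf y := by
        rw [← lintegral_union ((hmΩs.diff hmΩ).diff hmS)
          disjoint_sdiff_self_right, union_diff_cancel hSsub]
end

section
/- Let N ≥ 1, s ∈ (0,1), let G be a Young function satisfying the growth condition with exponents 1 < p⁻ ≤ p⁺ < ∞, let B₁ ⊆ ℝ^N be the open unit ball centered at the origin, and let x̃ ∈ ℝ^N with |x̃| = 1/2. Then for every c > 0, ∫_{ℝ^N∖B₁} G(c/|x̃−y|^s) |x̃−y|^{−N} dy > ∫_{ℝ^N∖B₁} G(c/|y|^s) |y|^{−N} dy. -/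
open MeasureTheory Metric Set Filter
open scoped ENNReal Topology

section aux
variable {G g : ℝ → ℝ}

lemma young_gInt (hY : IsYoungPair G g) {a b : ℝ} (ha : 0 ≤ a) (hab : a ≤ b) :
    IntervalIntegrable g volume a b := by
  apply MonotoneOn.intervalIntegrable
  apply hY.g_mono.mono
  rw [Set.uIcc_of_le hab]
  exact fun x hx => le_trans ha hx.1

lemma young_G_mono_s12 (hY : IsYoungPair G g) {a b : ℝ} (ha : 0 ≤ a) (hab : a ≤ b) : G a ≤ G b := by
  rw [hY.G_eq a ha, hY.G_eq b (ha.trans hab),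
    ← intervalIntegral.integral_add_adjacent_intervals (young_gInt hY le_rfl ha)
      (young_gInt hY ha hab)]
  have : 0 ≤ ∫ τ in a..b, g τ :=
    intervalIntegral.integral_nonneg hab fun u hu => young_g_nonneg hY (ha.trans hu.1)
  linarith

lemma young_G_le_mul (hY : IsYoungPair G g) {t : ℝ} (ht : 0 ≤ t) : G t ≤ t * g t := by
  rw [hY.G_eq t ht]
  have hB : ∫ τ in (0:ℝ)..t, g τ ≤ ∫ τ in (0:ℝ)..t, (fun _ => g t) τ :=
    intervalIntegral.integral_mono_on ht (young_gInt hY le_rfl ht) intervalIntegrable_const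
      (fun x hx => hY.g_mono hx.1 ht hx.2)
  rw [intervalIntegral.integral_const, smul_eq_mul] at hB
  linarith

end aux

section ker
variable {G g : ℝ → ℝ} {c s Nr : ℝ}

lemma ker_nonneg (hY : IsYoungPair G g) (hc : 0 ≤ c) {r : ℝ} (hr : 0 < r) :
    0 ≤ G (c / r ^ s) / r ^ Nr :=
  div_nonneg (young_G_nonneg hY (div_nonneg hc (Real.rpow_nonneg hr.le s)))
    (Real.rpow_nonneg hr.le Nr)

lemma ker_anti (hY : IsYoungPair G g) (hc : 0 ≤ c) (hs : 0 < s) (hNr : 0 ≤ Nr)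
    {a b : ℝ} (ha : 0 < a) (hab : a ≤ b) :
    G (c / b ^ s) / b ^ Nr ≤ G (c / a ^ s) / a ^ Nr := by
  have hb : 0 < b := ha.trans_le hab
  have has : 0 < a ^ s := Real.rpow_pos_of_pos ha s
  have hbs : 0 < b ^ s := Real.rpow_pos_of_pos hb s
  have h1 : c / b ^ s ≤ c / a ^ s := by
    apply div_le_div_of_nonneg_left hc has (Real.rpow_le_rpow ha.le hab hs.le)
  have h2 : G (c / b ^ s) ≤ G (c / a ^ s) := young_G_mono_s12 hY (by positivity) h1
  exact div_le_div₀ (young_G_nonneg hY (by positivity)) h2 (Real.rpow_pos_of_pos ha Nr)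
    (Real.rpow_le_rpow ha.le hab hNr)

lemma ker_strict (hY : IsYoungPair G g) (hc : 0 < c) (hs : 0 < s) (hNr : 0 < Nr)
    {a b : ℝ} (ha : 0 < a) (hab : a < b) :
    G (c / b ^ s) / b ^ Nr < G (c / a ^ s) / a ^ Nr := by
  have hb : 0 < b := ha.trans hab
  have hGb : 0 < G (c / b ^ s) := young_G_pos hY (by positivity)
  have h3 : G (c / b ^ s) / b ^ Nr < G (c / b ^ s) / a ^ Nr :=
    div_lt_div_of_pos_left hGb (Real.rpow_pos_of_pos ha Nr)
      (Real.rpow_lt_rpow ha.le hab hNr)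
  refine h3.trans_le ?_
  have h2 : G (c / b ^ s) ≤ G (c / a ^ s) := by
    apply young_G_mono_s12 hY (by positivity)
    apply div_le_div_of_nonneg_left hc.le (Real.rpow_pos_of_pos ha s)
      (Real.rpow_le_rpow ha.le hab.le hs.le)
  exact div_le_div₀ (young_G_nonneg hY (by positivity)) h2 (Real.rpow_pos_of_pos ha Nr) le_rfl

lemma ker_bound (hY : IsYoungPair G g) (hc : 0 < c) (hs : 0 < s) (hNr : 0 ≤ Nr)
    {r : ℝ} (hr : 1 ≤ r) :
    G (c / r ^ s) / r ^ Nr ≤ (c * g c * 2 ^ (Nr + s)) * (1 + r) ^ (-(Nr + s)) := by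
  have hr0 : (0:ℝ) < r := lt_of_lt_of_le one_pos hr
  have hrs1 : 1 ≤ r ^ s := Real.one_le_rpow hr hs.le
  have hts : 0 < c / r ^ s := by positivity
  have hgc : 0 ≤ g c := young_g_nonneg hY hc.le
  have htc : c / r ^ s ≤ c := by
    rw [div_le_iff₀ (by positivity)]; nlinarith
  have h1 : G (c / r ^ s) ≤ (c / r ^ s) * g c := by
    calc G (c / r ^ s) ≤ (c / r ^ s) * g (c / r ^ s) := young_G_le_mul hY hts.le
      _ ≤ (c / r ^ s) * g c := mul_le_mul_of_nonneg_left (hY.g_mono hts.le hc.le htc) hts.le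
  have hq : 0 < Nr + s := by linarith
  have hrq : 0 < r ^ (Nr + s) := Real.rpow_pos_of_pos hr0 _
  have hAq : 0 < (1 + r) ^ (Nr + s) := Real.rpow_pos_of_pos (by linarith) _
  have key : G (c / r ^ s) / r ^ Nr ≤ (c * g c) * (r ^ (Nr + s))⁻¹ := by
    have hstep : G (c / r ^ s) / r ^ Nr ≤ ((c / r ^ s) * g c) / r ^ Nr :=
      div_le_div₀ (by positivity) h1 (Real.rpow_pos_of_pos hr0 Nr) le_rfl
    refine hstep.trans (le_of_eq ?_)
    have hadd : r ^ s * r ^ Nr = r ^ (Nr + s) := by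
      rw [← Real.rpow_add hr0]; ring_nf
    rw [div_mul_eq_mul_div, div_div, hadd, div_eq_mul_inv]
  have h2 : (1 + r) ^ (Nr + s) ≤ 2 ^ (Nr + s) * r ^ (Nr + s) := by
    rw [← Real.mul_rpow (by norm_num) hr0.le]
    exact Real.rpow_le_rpow (by linarith) (by linarith) hq.le
  have h3 : (r ^ (Nr + s))⁻¹ ≤ 2 ^ (Nr + s) * ((1 + r) ^ (Nr + s))⁻¹ := by
    have : (1:ℝ) / r ^ (Nr + s) ≤ 2 ^ (Nr + s) / (1 + r) ^ (Nr + s) := by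
      rw [div_le_div_iff₀ hrq hAq]; nlinarith
    simpa [one_div, div_eq_mul_inv] using this
  calc G (c / r ^ s) / r ^ Nr ≤ (c * g c) * (r ^ (Nr + s))⁻¹ := key
    _ ≤ (c * g c) * (2 ^ (Nr + s) * ((1 + r) ^ (Nr + s))⁻¹) :=
        mul_le_mul_of_nonneg_left h3 (by positivity)
    _ = (c * g c * 2 ^ (Nr + s)) * (1 + r) ^ (-(Nr + s)) := by
        rw [Real.rpow_neg (by linarith)]; ring

end ker

/-- shifting the singularity of the radial kernel to an interior point
`x̃` with `|x̃| = 1/2` strictly increases the integral over the complement of the unit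
ball. -/
theorem kernel_integral_shifted_gt
    {N : ℕ} (hN : 1 ≤ N) {s : ℝ} (hs : s ∈ Set.Ioo (0 : ℝ) 1)
    {G g : ℝ → ℝ} (hY : IsYoungPair G g) {pm pp : ℝ} (hG : GrowthCond G g pm pp)
    {xt : EuclideanSpace ℝ (Fin N)} (hxt : ‖xt‖ = 1 / 2) {c : ℝ} (hc : 0 < c) :
    (∫⁻ y in (Metric.ball (0 : EuclideanSpace ℝ (Fin N)) 1)ᶜ,
        ENNReal.ofReal (G (c / ‖y‖ ^ s) / ‖y‖ ^ (N : ℝ))) <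
      ∫⁻ y in (Metric.ball (0 : EuclideanSpace ℝ (Fin N)) 1)ᶜ,
        ENNReal.ofReal (G (c / dist xt y ^ s) / dist xt y ^ (N : ℝ)) := by
  obtain ⟨hs0, hs1⟩ := hs
  have hNrpos : (0:ℝ) < (N:ℝ) := by exact_mod_cast hN
  have hNr0 : (0:ℝ) ≤ (N:ℝ) := hNrpos.le
  set F0 : EuclideanSpace ℝ (Fin N) → ℝ≥0∞ :=
    fun y => ENNReal.ofReal (G (c / ‖y‖ ^ s) / ‖y‖ ^ (N : ℝ)) with hF0
  set F1 : EuclideanSpace ℝ (Fin N) → ℝ≥0∞ :=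
    fun y => ENNReal.ofReal (G (c / dist xt y ^ s) / dist xt y ^ (N : ℝ)) with hF1
  set C := (Metric.ball (0 : EuclideanSpace ℝ (Fin N)) 1)ᶜ with hCdef
  have memC : ∀ y : EuclideanSpace ℝ (Fin N), y ∈ C ↔ 1 ≤ ‖y‖ := by
    intro y
    rw [hCdef, Set.mem_compl_iff, Metric.mem_ball, dist_zero_right, not_lt]
  set Mset := C ∩ {y | ‖y‖ < ‖y - xt‖} with hMdef
  set Pset := C ∩ {y | ‖y - xt‖ ≤ ‖y‖} with hPdef
  have hunion : C = Pset ∪ Mset := by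
    ext y; constructor
    · intro hy
      rcases le_or_gt ‖y - xt‖ ‖y‖ with h | h
      · exact Or.inl ⟨hy, h⟩
      · exact Or.inr ⟨hy, h⟩
    · rintro (⟨hy, -⟩ | ⟨hy, -⟩) <;> exact hy
  have hdisj : Disjoint Pset Mset := by
    rw [Set.disjoint_left]
    rintro y ⟨-, h1⟩ ⟨-, h2⟩
    simp only [Set.mem_setOf_eq] at h1 h2
    exact absurd h1 (not_le.mpr h2)
  have mC : MeasurableSet C := measurableSet_ball.compl
  have hcont : Continuous fun y : EuclideanSpace ℝ (Fin N) => ‖y - xt‖ :=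
    (continuous_id.sub continuous_const).norm
  have mM : MeasurableSet Mset :=
    mC.inter (measurableSet_lt continuous_norm.measurable hcont.measurable)
  have mP : MeasurableSet Pset :=
    mC.inter (measurableSet_le hcont.measurable continuous_norm.measurable)
  -- the reflection
  set τ : EuclideanSpace ℝ (Fin N) → EuclideanSpace ℝ (Fin N) := fun z => xt - z with hτdef
  have hτpres : MeasurePreserving τ volume volume := Measure.measurePreserving_sub_left volume xt
  have hτemb : MeasurableEmbedding τ := (MeasurableEquiv.subLeft xt).measurableEmbedding
  set S := τ ⁻¹' Mset with hSdef
  have mS : MeasurableSet S := mM.preimage hτpres.measurable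
  have hSP : S ⊆ Pset := by
    rintro z ⟨hz1, hz2⟩
    simp only [Set.mem_setOf_eq] at hz2
    have e1 : ‖τ z‖ = ‖z - xt‖ := norm_sub_rev xt z
    have e2 : ‖τ z - xt‖ = ‖z‖ := by
      rw [hτdef]; simp
    rw [e1, e2] at hz2
    have h1 : (1:ℝ) ≤ ‖z - xt‖ := e1 ▸ (memC _).mp hz1
    exact ⟨(memC _).mpr (h1.trans hz2.le), hz2.le⟩
  -- change of variables
  have covM0 : ∫⁻ y in Mset, F0 y = ∫⁻ z in S, F1 z := by
    rw [← hτpres.setLIntegral_comp_preimage_emb hτemb F0 Mset]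
    apply lintegral_congr
    intro z
    simp only [hF0, hF1, hτdef]
    rw [dist_eq_norm]
  have covM1 : ∫⁻ y in Mset, F1 y = ∫⁻ z in S, F0 z := by
    rw [← hτpres.setLIntegral_comp_preimage_emb hτemb F1 Mset]
    apply lintegral_congr
    intro z
    simp only [hF0, hF1, hτdef]
    rw [dist_eq_norm, sub_sub_cancel]
  have hPsplit : ∀ F : EuclideanSpace ℝ (Fin N) → ℝ≥0∞,
      ∫⁻ y in Pset, F y = (∫⁻ y in Pset \ S, F y) + ∫⁻ y in S, F y := by
    intro F
    rw [← lintegral_union mS disjoint_sdiff_self_left, Set.diff_union_of_subset hSP]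
  -- finiteness of the unshifted integral
  have hNlt : (Module.finrank ℝ (EuclideanSpace ℝ (Fin N)) : ℝ) < (N:ℝ) + s := by
    rw [finrank_euclideanSpace_fin]; linarith
  have hgc : 0 ≤ g c := young_g_nonneg hY hc.le
  set K := c * g c * 2 ^ ((N:ℝ) + s) with hKdef
  have hK0 : (0:ℝ) ≤ K := by positivity
  have hfin : (∫⁻ y in C, F0 y) < ⊤ := by
    have hb : ∀ᵐ y ∂(volume.restrict C),
        F0 y ≤ ENNReal.ofReal K * ENNReal.ofReal ((1 + ‖y‖) ^ (-((N:ℝ) + s))) := by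
      rw [ae_restrict_iff' mC]
      filter_upwards with y hy
      have h1 : (1:ℝ) ≤ ‖y‖ := (memC y).mp hy
      have hbd := ker_bound hY hc hs0 hNr0 h1
      calc F0 y ≤ ENNReal.ofReal (K * (1 + ‖y‖) ^ (-((N:ℝ) + s))) :=
            ENNReal.ofReal_le_ofReal hbd
        _ = ENNReal.ofReal K * ENNReal.ofReal ((1 + ‖y‖) ^ (-((N:ℝ) + s))) :=
            ENNReal.ofReal_mul hK0
    calc ∫⁻ y in C, F0 y
        ≤ ∫⁻ y in C, ENNReal.ofReal K * ENNReal.ofReal ((1 + ‖y‖) ^ (-((N:ℝ) + s))) :=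
          lintegral_mono_ae hb
      _ ≤ ∫⁻ y, ENNReal.ofReal K * ENNReal.ofReal ((1 + ‖y‖) ^ (-((N:ℝ) + s))) :=
          setLIntegral_le_lintegral _ _
      _ = ENNReal.ofReal K * ∫⁻ y, ENNReal.ofReal ((1 + ‖y‖) ^ (-((N:ℝ) + s))) :=
          lintegral_const_mul' _ _ ENNReal.ofReal_ne_top
      _ < ⊤ := ENNReal.mul_lt_top ENNReal.ofReal_lt_top (finite_integral_one_add_norm hNlt)
  -- the strictness region
  set z₀ : EuclideanSpace ℝ (Fin N) := ((17:ℝ)/8) • xt with hz₀def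
  have hz₀norm : ‖z₀‖ = 17/16 := by
    rw [hz₀def, norm_smul, hxt]; simp; norm_num
  have hz₀xt : ‖z₀ - xt‖ = 9/16 := by
    have h : z₀ - xt = ((9:ℝ)/8) • xt := by
      rw [hz₀def, show ((17:ℝ)/8) • xt - xt = ((17:ℝ)/8 - 1) • xt by
        rw [sub_smul, one_smul]]
      norm_num
    rw [h, norm_smul, hxt]; simp; norm_num
  set T := Metric.ball z₀ (1/16) with hTdef
  have mT : MeasurableSet T := measurableSet_ball
  have hTfacts : ∀ z ∈ T, 1 ≤ ‖z‖ ∧ ‖z - xt‖ ≤ 5/8 ∧ ‖z‖ ≤ 9/8 := by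
    intro z hz
    have hd : ‖z - z₀‖ < 1/16 := by
      rw [← dist_eq_norm]; exact Metric.mem_ball.mp hz
    have t1 : ‖z₀‖ - ‖z‖ ≤ ‖z₀ - z‖ := norm_sub_norm_le _ _
    have t1' : ‖z₀ - z‖ = ‖z - z₀‖ := norm_sub_rev _ _
    have t2 : ‖z - xt‖ ≤ ‖z - z₀‖ + ‖z₀ - xt‖ := norm_sub_le_norm_sub_add_norm_sub _ _ _
    have t3 : ‖z‖ - ‖z₀‖ ≤ ‖z - z₀‖ := norm_sub_norm_le _ _
    refine ⟨by rw [t1'] at t1; linarith, by rw [hz₀xt] at t2; linarith, by linarith⟩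
  have hTsub : T ⊆ Pset \ S := by
    intro z hz
    obtain ⟨h1, h2, h3⟩ := hTfacts z hz
    constructor
    · exact ⟨(memC z).mpr h1, by simpa using h2.trans (by linarith)⟩
    · intro hzS
      have : (1:ℝ) ≤ ‖τ z‖ := (memC _).mp hzS.1
      rw [hτdef] at this
      simp only at this
      rw [norm_sub_rev] at this
      linarith
  set δ := G (c / ((5:ℝ)/8) ^ s) / ((5:ℝ)/8) ^ (N:ℝ) - G (c / (1:ℝ) ^ s) / (1:ℝ) ^ (N:ℝ)
    with hδdef
  have hδpos : 0 < δ :=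
    sub_pos.mpr (ker_strict hY hc hs0 hNrpos (by norm_num) (by norm_num))
  -- key strict gain on Pset \ S
  have hkey : (∫⁻ z in Pset \ S, F0 z) + ENNReal.ofReal δ * volume T
      ≤ ∫⁻ z in Pset \ S, F1 z := by
    have step1 : (∫⁻ z in Pset \ S,
        (F0 z + T.indicator (fun _ => ENNReal.ofReal δ) z)) ≤ ∫⁻ z in Pset \ S, F1 z := by
      apply lintegral_mono_ae
      rw [ae_restrict_iff' (mP.diff mS)]
      filter_upwards with z hz
      obtain ⟨⟨hzC, hzP⟩, -⟩ := hz
      simp only [Set.mem_setOf_eq] at hzP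
      have h1 : (1:ℝ) ≤ ‖z‖ := (memC z).mp hzC
      have hdeq : dist xt z = ‖z - xt‖ := by rw [dist_eq_norm, norm_sub_rev]
      have hdle : dist xt z ≤ ‖z‖ := by rw [hdeq]; exact hzP
      have hdpos : (0:ℝ) < dist xt z := by
        rw [hdeq]
        have := norm_sub_norm_le z xt
        rw [hxt] at this
        linarith
      by_cases hzT : z ∈ T
      · rw [Set.indicator_of_mem hzT]
        obtain ⟨-, h58, h98⟩ := hTfacts z hzT
        have e1 : G (c / ‖z‖ ^ s) / ‖z‖ ^ (N:ℝ)
            ≤ G (c / (1:ℝ) ^ s) / (1:ℝ) ^ (N:ℝ) :=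
          ker_anti hY hc.le hs0 hNr0 one_pos h1
        have e2 : G (c / ((5:ℝ)/8) ^ s) / ((5:ℝ)/8) ^ (N:ℝ)
            ≤ G (c / dist xt z ^ s) / dist xt z ^ (N:ℝ) :=
          ker_anti hY hc.le hs0 hNr0 hdpos (by rw [hdeq]; exact h58)
        have hnn : 0 ≤ G (c / ‖z‖ ^ s) / ‖z‖ ^ (N:ℝ) :=
          ker_nonneg hY hc.le (by linarith)
        simp only [hF0, hF1]
        rw [← ENNReal.ofReal_add hnn hδpos.le]
        apply ENNReal.ofReal_le_ofReal
        rw [hδdef]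
        linarith
      · rw [Set.indicator_of_notMem hzT, add_zero]
        simp only [hF0, hF1]
        exact ENNReal.ofReal_le_ofReal (ker_anti hY hc.le hs0 hNr0 hdpos hdle)
    have step2 : (∫⁻ z in Pset \ S,
        (F0 z + T.indicator (fun _ => ENNReal.ofReal δ) z))
        = (∫⁻ z in Pset \ S, F0 z) + ENNReal.ofReal δ * volume T := by
      rw [lintegral_add_right _ (measurable_const.indicator mT)]
      congr 1
      rw [lintegral_indicator mT, setLIntegral_const, Measure.restrict_apply mT,
        Set.inter_eq_self_of_subset_left hTsub]
    rw [← step2]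
    exact step1
  -- assemble
  have volT : volume T ≠ 0 := (measure_ball_pos volume z₀ (by norm_num)).ne'
  have hδv : ENNReal.ofReal δ * volume T ≠ 0 :=
    mul_ne_zero (ENNReal.ofReal_pos.mpr hδpos).ne' volT
  have hle0 : (∫⁻ z in Pset \ S, F0 z) ≤ ∫⁻ y in C, F0 y := by
    apply lintegral_mono_set
    intro z hz
    exact (Set.diff_subset.trans (Set.inter_subset_left)) hz
  have hleS : (∫⁻ z in S, F0 z) ≤ ∫⁻ y in C, F0 y := by
    apply lintegral_mono_set
    exact fun z hz => Set.inter_subset_left (hSP hz)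
  have hleS1 : (∫⁻ z in S, F1 z) ≤ ∫⁻ y in C, F0 y := by
    rw [← covM0]
    apply lintegral_mono_set
    exact fun z hz => Set.inter_subset_left hz
  have ha : (∫⁻ z in Pset \ S, F0 z) ≠ ⊤ := (lt_of_le_of_lt hle0 hfin).ne
  have hk : (∫⁻ z in S, F0 z) + (∫⁻ z in S, F1 z) ≠ ⊤ :=
    (ENNReal.add_lt_top.mpr ⟨lt_of_le_of_lt hleS hfin, lt_of_le_of_lt hleS1 hfin⟩).ne
  have hab : (∫⁻ z in Pset \ S, F0 z) < ∫⁻ z in Pset \ S, F1 z :=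
    lt_of_lt_of_le (ENNReal.lt_add_right ha hδv) hkey
  calc ∫⁻ y in C, F0 y
      = (∫⁻ y in Pset, F0 y) + ∫⁻ y in Mset, F0 y := by
        rw [hunion, lintegral_union mM hdisj]
    _ = ((∫⁻ z in Pset \ S, F0 z) + ∫⁻ z in S, F0 z) + ∫⁻ z in S, F1 z := by
        rw [hPsplit F0, covM0]
    _ = (∫⁻ z in Pset \ S, F0 z) + ((∫⁻ z in S, F0 z) + ∫⁻ z in S, F1 z) := by
        rw [add_assoc]
    _ < (∫⁻ z in Pset \ S, F1 z) + ((∫⁻ z in S, F0 z) + ∫⁻ z in S, F1 z) :=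
        ENNReal.add_lt_add_right hk hab
    _ = ((∫⁻ z in Pset \ S, F1 z) + ∫⁻ z in S, F1 z) + ∫⁻ z in S, F0 z := by
        ring
    _ = (∫⁻ y in Pset, F1 y) + ∫⁻ y in Mset, F1 y := by
        rw [hPsplit F1, covM1]
    _ = ∫⁻ y in C, F1 y := by
        rw [hunion, lintegral_union mM hdisj]
end
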